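/- arXiv:1208.4383 — 2 statements merged into one kernel-verified Lean document; each statement's English description precedes it below -/
import Mathlib

section
/- Let T be an annihilator extension of an infinite residually nilpotent finitely generated semigroup S, with annihilator element t and quotient map ν: T → S with kernel ⟨t⟩, and let c be defined by t ∈ T^c \ T^{c+1}. Then T/T^i ≅ S/S^i for 1 ≤ i ≤ c, and |T/T^i| = |S/S^i| + 1 for i ≥ c+1. -/
/-- `sgPow S i` is the set `Sⁱ` of all products of `i` elements of `S`
(with the convention `S⁰ = S¹ = S`). -/
def sgPow (S : Type*) [Mul S] : ℕ → Set S
  | 0 => Set.univ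
  | 1 => Set.univ
  | n + 2 => Set.image2 (· * ·) (sgPow S (n + 1)) Set.univ

/-- A semigroup with zero is nilpotent of class `c` if `S^(c+1) = {0}` and `S^c ≠ {0}`. -/
def IsNilpotentOfClass (S : Type*) [SemigroupWithZero S] (c : ℕ) : Prop :=
  sgPow S (c + 1) = {0} ∧ sgPow S c ≠ {0}

/-- `mpow x i` is the power `xⁱ` in a magma, for `i ≥ 1` (with `mpow x 0 = x` by convention). -/
def mpow {S : Type*} [Mul S] (x : S) : ℕ → S
  | 0 => x
  | 1 => x
  | n + 2 => mpow x (n + 1) * x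
theorem sgPow_succ_subset (S : Type*) [Mul S] : ∀ i, sgPow S (i + 1) ⊆ sgPow S i
  | 0 => by simp [sgPow]
  | 1 => by intro x _; simp [sgPow]
  | n + 2 => by
      intro x hx
      rcases hx with ⟨a, ha, b, hb, rfl⟩
      exact ⟨a, sgPow_succ_subset S (n + 1) ha, b, hb, rfl⟩

theorem mul_mem_sgPow_right {S : Type*} [Mul S] :
    ∀ i, ∀ a ∈ sgPow S i, ∀ b : S, a * b ∈ sgPow S i
  | 0 => by intro a _ b; trivial
  | 1 => by intro a _ b; trivial
  | n + 2 => fun a ha b =>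
      sgPow_succ_subset S (n + 2) ⟨a, ha, b, trivial, rfl⟩

theorem mul_mem_sgPow_left {S : Type*} [Semigroup S] :
    ∀ i, ∀ a ∈ sgPow S i, ∀ b : S, b * a ∈ sgPow S i
  | 0 => by intro a _ b; trivial
  | 1 => by intro a _ b; trivial
  | n + 2 => by
      rintro _ ⟨c, hc, d, -, rfl⟩ b
      exact ⟨b * c, mul_mem_sgPow_left (n + 1) c hc b, d, trivial, mul_assoc b c d⟩

theorem zero_mem_sgPow {S : Type*} [MulZeroClass S] : ∀ i, (0 : S) ∈ sgPow S i
  | 0 => trivial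
  | 1 => trivial
  | n + 2 => ⟨0, zero_mem_sgPow (n + 1), 0, trivial, (mul_zero 0)⟩

/-- The Rees congruence identifying all elements of the ideal `Sⁱ`. -/
def reesSetoid (S : Type*) (I : Set S) : Setoid S where
  r x y := x = y ∨ (x ∈ I ∧ y ∈ I)
  iseqv := ⟨fun _ => Or.inl rfl, fun h => by tauto, fun h₁ h₂ => by
    rcases h₁ with rfl | h₁
    · exact h₂
    · rcases h₂ with rfl | h₂ <;> exact Or.inr ⟨h₁.1, by tauto⟩⟩

/-- The Rees quotient `S/Sⁱ` of a semigroup by the ideal `Sⁱ`. -/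
def ReesQuot (S : Type*) [Mul S] (i : ℕ) := Quotient (reesSetoid S (sgPow S i))

instance {S : Type*} [Semigroup S] {i : ℕ} : Semigroup (ReesQuot S i) where
  mul := Quotient.map₂ (· * ·) (by
    intro a₁ a₂ h₁ b₁ b₂ h₂
    rcases h₁ with rfl | ⟨ha₁, ha₂⟩
    · rcases h₂ with rfl | ⟨hb₁, hb₂⟩
      · exact Or.inl rfl
      · exact Or.inr ⟨mul_mem_sgPow_left i b₁ hb₁ a₁, mul_mem_sgPow_left i b₂ hb₂ a₁⟩
    · exact Or.inr ⟨mul_mem_sgPow_right i a₁ ha₁ b₁, mul_mem_sgPow_right i a₂ ha₂ b₂⟩)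
  mul_assoc a b c := by
    induction a using Quotient.inductionOn
    induction b using Quotient.inductionOn
    induction c using Quotient.inductionOn
    exact congrArg Quotient.mk'' (mul_assoc _ _ _)

instance {S : Type*} [SemigroupWithZero S] {i : ℕ} : SemigroupWithZero (ReesQuot S i) where
  zero := Quotient.mk _ 0
  zero_mul a := by
    induction a using Quotient.inductionOn
    exact congrArg (Quotient.mk _) (zero_mul _)
  mul_zero a := by
    induction a using Quotient.inductionOn
    exact congrArg (Quotient.mk _) (mul_zero _)
/-- A semigroup is finitely generated if it is generated by a finite set. -/
def FGSemigroup (S : Type*) [Mul S] : Prop :=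
  ∃ F : Finset S, Subsemigroup.closure (F : Set S) = ⊤

/-- A semigroup with zero is residually nilpotent if the intersection of its
power ideals is `{0}`. -/
def ResiduallyNilpotent (S : Type*) [SemigroupWithZero S] : Prop :=
  ⋂ i, sgPow S (i + 1) = {0}

/-- The coclass of the nilpotent quotient `S/Sⁱ`: its number of non-zero elements,
`|S \ Sⁱ|`, minus its class `i - 1`. -/
noncomputable def ccQuot (S : Type*) [SemigroupWithZero S] (i : ℕ) : ℕ :=
  (Set.univ \ sgPow S i).ncard - (i - 1)

/-- A finitely generated residually nilpotent semigroup has coclass `r` if the coclasses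
of its nilpotent quotients `S/Sⁱ` converge to `r`. -/
def HasCoclassSg (S : Type*) [SemigroupWithZero S] (r : ℕ) : Prop :=
  ∀ᶠ i in Filter.atTop, ccQuot S i = r

/-!
The quotient map `ν` carries `Tⁱ` onto `Sⁱ` and is injective away from `{0, t}`, so an element
`x ≠ t` lies in `Tⁱ` exactly when `ν x` lies in `Sⁱ`. For `i ≤ c` also `t ∈ Tⁱ`, and `ν` then
induces an isomorphism `T/Tⁱ ≅ S/Sⁱ`. For `i > c` we have `t ∉ Tⁱ`, so `T \ Tⁱ` is `{t}` together
with a copy of `S \ Sⁱ`; the latter is finite because `S` is finitely generated (every element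
outside `Sⁱ` is a product of fewer than `i` generators), which makes the count meaningful.
-/

theorem sgPow_antitone (S : Type*) [Mul S] : Antitone (sgPow S) :=
  antitone_nat_of_succ_le (sgPow_succ_subset S)

-- `prodsOf F n` consists of the products of `n + 1` (not `n`) elements of `F`.
def prodsOf {S : Type*} [Mul S] (F : Set S) : ℕ → Set S
  | 0 => F
  | n + 1 => Set.image2 (· * ·) (prodsOf F n) F

theorem mul_mem_prodsOf {S : Type*} [Semigroup S] {F : Set S} {a b : S} {m : ℕ}
    (ha : a ∈ prodsOf F m) : ∀ {n}, b ∈ prodsOf F n → a * b ∈ prodsOf F (m + n + 1)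
  | 0, hb => ⟨a, ha, b, hb, rfl⟩
  | n + 1, ⟨b', hb', f, hf, hb⟩ => by
      subst hb
      rw [← mul_assoc]
      exact ⟨a * b', mul_mem_prodsOf ha hb', f, hf, rfl⟩

theorem exists_mem_prodsOf_of_mem_closure {S : Type*} [Semigroup S] {F : Set S} {x : S}
    (hx : x ∈ Subsemigroup.closure F) : ∃ n, x ∈ prodsOf F n := by
  induction hx using Subsemigroup.closure_induction with
  | mem y hy => exact ⟨0, hy⟩
  | mul a b _ _ iha ihb =>
      obtain ⟨m, hm⟩ := iha
      obtain ⟨n, hn⟩ := ihb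
      exact ⟨m + n + 1, mul_mem_prodsOf hm hn⟩

theorem Set.Finite.prodsOf {S : Type*} [Mul S] {F : Set S} (hF : F.Finite) :
    ∀ n, (prodsOf F n).Finite
  | 0 => hF
  | n + 1 => (hF.prodsOf n).image2 _ hF

theorem prodsOf_subset_sgPow {S : Type*} [Mul S] (F : Set S) :
    ∀ n, prodsOf F n ⊆ sgPow S (n + 1)
  | 0 => Set.subset_univ _
  | n + 1 => Set.image2_subset (prodsOf_subset_sgPow F n) (Set.subset_univ F)

theorem FGSemigroup.finite_compl_sgPow {S : Type*} [Semigroup S] (hfg : FGSemigroup S)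
    (i : ℕ) : (sgPow S i)ᶜ.Finite := by
  obtain ⟨F, hF⟩ := hfg
  refine ((Set.finite_Iio i).biUnion fun n _ => F.finite_toSet.prodsOf n).subset fun x hx => ?_
  obtain ⟨n, hn⟩ := exists_mem_prodsOf_of_mem_closure (hF ▸ Subsemigroup.mem_top x)
  refine Set.mem_biUnion (Set.mem_Iio.2 ?_) hn
  by_contra! hin
  exact hx (sgPow_antitone S (by omega) (prodsOf_subset_sgPow _ n hn))

theorem Nat.card_reesQuot {S : Type*} [MulZeroClass S] {i : ℕ} (hfin : (sgPow S i)ᶜ.Finite) :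
    Nat.card (ReesQuot S i) = (sgPow S i)ᶜ.ncard + 1 := by
  set I := sgPow S i
  let e : Option ↥Iᶜ → ReesQuot S i := fun o => Quotient.mk _ (o.elim 0 Subtype.val)
  have hr : ∀ {x y : S}, y ∉ I → (reesSetoid S I x y ↔ x = y) := fun hy =>
    ⟨fun h => h.resolve_right fun h' => hy h'.2, Or.inl⟩
  have he : Function.Bijective e := by
    refine ⟨?_, fun q => ?_⟩
    · rintro (_ | ⟨x, hx⟩) (_ | ⟨y, hy⟩) h <;> replace h := Quotient.exact h
      · rfl
      · exact absurd ((hr hy).1 h ▸ zero_mem_sgPow i) hy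
      · exact absurd ((hr hx).1 ((reesSetoid S I).symm h) ▸ zero_mem_sgPow i) hx
      · exact congrArg some (Subtype.ext ((hr hy).1 h))
    · induction q using Quotient.inductionOn with
      | h x =>
        by_cases hx : x ∈ I
        · exact ⟨none, Quotient.sound (Or.inr ⟨zero_mem_sgPow i, hx⟩)⟩
        · exact ⟨some ⟨x, hx⟩, rfl⟩
  have := hfin.to_subtype
  rw [← Nat.card_eq_of_bijective e he, Finite.card_option, Nat.card_coe_set_eq]

section MulHom

variable {S T : Type*}

theorem mapsTo_sgPow [Mul S] [Mul T] (f : T →ₙ* S) :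
    ∀ i, Set.MapsTo f (sgPow T i) (sgPow S i)
  | 0 | 1 => Set.mapsTo_univ _ _
  | n + 2 => by
      rintro _ ⟨a, ha, b, -, rfl⟩
      exact ⟨f a, mapsTo_sgPow f (n + 1) ha, f b, trivial, (map_mul f a b).symm⟩

theorem image_sgPow [Mul S] [Mul T] {f : T →ₙ* S} (hf : Function.Surjective f) :
    ∀ i, f '' sgPow T i = sgPow S i
  | 0 | 1 => by simpa [sgPow] using hf.range_eq
  | n + 2 => by
      refine (mapsTo_sgPow f _).image_subset.antisymm ?_
      rintro _ ⟨a, ha, b, -, rfl⟩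
      obtain ⟨x, hx, rfl⟩ := (image_sgPow hf (n + 1)).symm ▸ ha
      obtain ⟨y, rfl⟩ := hf b
      exact ⟨x * y, ⟨x, hx, y, trivial, rfl⟩, map_mul f x y⟩

theorem MulHom.map_zero_of_surjective [MulZeroClass S] [MulZeroClass T] {f : T →ₙ* S}
    (hf : Function.Surjective f) : f 0 = 0 := by
  obtain ⟨y, hy⟩ := hf 0
  rw [← zero_mul y, map_mul, hy, mul_zero]

def ReesQuot.map [Semigroup S] [Semigroup T] (f : T →ₙ* S) (i : ℕ) :
    ReesQuot T i →ₙ* ReesQuot S i where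
  toFun := Quotient.map f <| by
    rintro a b (rfl | ⟨ha, hb⟩)
    exacts [Or.inl rfl, Or.inr ⟨mapsTo_sgPow f i ha, mapsTo_sgPow f i hb⟩]
  map_mul' := by
    rintro ⟨x⟩ ⟨y⟩
    exact congrArg (Quotient.mk _) (map_mul f x y)

theorem ReesQuot.map_surjective [Semigroup S] [Semigroup T] {f : T →ₙ* S}
    (hf : Function.Surjective f) (i : ℕ) : Function.Surjective (ReesQuot.map f i) := by
  rintro ⟨s⟩
  obtain ⟨x, rfl⟩ := hf s
  exact ⟨Quotient.mk _ x, rfl⟩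

end MulHom

section AnnihilatorExtension

variable {S T : Type*} [SemigroupWithZero S] [SemigroupWithZero T] {f : T →ₙ* S} {t : T}

theorem mem_sgPow_iff_of_ne (hf : Function.Surjective f)
    (hinj : ∀ x y, x ≠ 0 → x ≠ t → f x = f y → x = y) {x : T} (hxt : x ≠ t) (i : ℕ) :
    x ∈ sgPow T i ↔ f x ∈ sgPow S i := by
  refine ⟨fun hx => mapsTo_sgPow f i hx, fun hx => ?_⟩
  obtain rfl | hx0 := eq_or_ne x 0
  · exact zero_mem_sgPow i
  obtain ⟨y, hy, hyx⟩ := (image_sgPow hf i).symm ▸ hx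
  exact hinj x y hx0 hxt hyx.symm ▸ hy

theorem mem_sgPow_iff_of_mem (hf : Function.Surjective f)
    (hinj : ∀ x y, x ≠ 0 → x ≠ t → f x = f y → x = y) (hft : f t = 0) {i : ℕ}
    (ht : t ∈ sgPow T i) (x : T) : x ∈ sgPow T i ↔ f x ∈ sgPow S i := by
  obtain rfl | hxt := eq_or_ne x t
  · exact iff_of_true ht (hft ▸ zero_mem_sgPow i)
  · exact mem_sgPow_iff_of_ne hf hinj hxt i

theorem ReesQuot.map_injective (hf : Function.Surjective f)
    (hinj : ∀ x y, x ≠ 0 → x ≠ t → f x = f y → x = y) (hft : f t = 0) {i : ℕ}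
    (ht : t ∈ sgPow T i) : Function.Injective (ReesQuot.map f i) := by
  rintro ⟨x⟩ ⟨y⟩ h
  replace h : f x = f y ∨ f x ∈ sgPow S i ∧ f y ∈ sgPow S i := Quotient.exact h
  apply Quotient.sound
  by_cases hx : f x ∈ sgPow S i
  · have hy : f y ∈ sgPow S i := h.elim (· ▸ hx) And.right
    exact Or.inr ⟨(mem_sgPow_iff_of_mem hf hinj hft ht x).2 hx,
      (mem_sgPow_iff_of_mem hf hinj hft ht y).2 hy⟩
  · have hx0 : x ≠ 0 := by
      rintro rfl
      exact hx (MulHom.map_zero_of_surjective hf ▸ zero_mem_sgPow i)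
    have hxt : x ≠ t := by
      rintro rfl
      exact hx (hft ▸ zero_mem_sgPow i)
    exact Or.inl (hinj x y hx0 hxt (h.resolve_right fun h => hx h.1))

theorem injOn_preimage_compl_sgPow (hf : Function.Surjective f)
    (hinj : ∀ x y, x ≠ 0 → x ≠ t → f x = f y → x = y) (hft : f t = 0) (i : ℕ) :
    Set.InjOn f (f ⁻¹' (sgPow S i)ᶜ) := by
  intro x hx y _ hxy
  refine hinj x y (fun hx0 => hx ?_) (fun hxt => hx ?_) hxy
  · exact hx0 ▸ MulHom.map_zero_of_surjective hf ▸ zero_mem_sgPow i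
  · exact hxt ▸ hft ▸ zero_mem_sgPow i

theorem compl_sgPow_eq_insert_preimage (hf : Function.Surjective f)
    (hinj : ∀ x y, x ≠ 0 → x ≠ t → f x = f y → x = y) {i : ℕ} (ht : t ∉ sgPow T i) :
    (sgPow T i)ᶜ = insert t (f ⁻¹' (sgPow S i)ᶜ) := by
  ext x
  obtain rfl | hxt := eq_or_ne x t
  · simpa using ht
  · simp [hxt, mem_sgPow_iff_of_ne hf hinj hxt i]

theorem Nat.card_reesQuot_eq_add_one (hf : Function.Surjective f)
    (hinj : ∀ x y, x ≠ 0 → x ≠ t → f x = f y → x = y) (hft : f t = 0) {i : ℕ}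
    (hfin : (sgPow S i)ᶜ.Finite) (ht : t ∉ sgPow T i) :
    Nat.card (ReesQuot T i) = Nat.card (ReesQuot S i) + 1 := by
  set A := f ⁻¹' (sgPow S i)ᶜ
  have hA : Set.InjOn f A := injOn_preimage_compl_sgPow hf hinj hft i
  have hfA : f '' A = (sgPow S i)ᶜ := Set.image_preimage_eq _ hf
  have hAfin : A.Finite := Set.Finite.of_finite_image (hfA ▸ hfin) hA
  have htA : t ∉ A := fun h => h (hft ▸ zero_mem_sgPow i)
  have hTfin : (sgPow T i)ᶜ.Finite := compl_sgPow_eq_insert_preimage hf hinj ht ▸ hAfin.insert t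
  rw [Nat.card_reesQuot hTfin, Nat.card_reesQuot hfin, compl_sgPow_eq_insert_preimage hf hinj ht,
    Set.ncard_insert_of_notMem htA hAfin, ← hfA, hA.ncard_image]

end AnnihilatorExtension

theorem statement5_general
    {S : Type*} [SemigroupWithZero S]
    (hfgS : FGSemigroup S)
    {T : Type*} [SemigroupWithZero T]
    (t : T)
    (ν : T → S) (hmul : ∀ x y : T, ν (x * y) = ν x * ν y)
    (hsurj : Function.Surjective ν)
    (hker : ∀ x : T, ν x = 0 ↔ x = 0 ∨ x = t)
    (hinj : ∀ x y : T, x ≠ 0 → x ≠ t → ν x = ν y → x = y)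
    (c : ℕ) (hc : t ∈ sgPow T c) (hc' : t ∉ sgPow T (c + 1)) :
    (∀ i, 1 ≤ i → i ≤ c → Nonempty (ReesQuot T i ≃* ReesQuot S i)) ∧
    (∀ i, c + 1 ≤ i → Nat.card (ReesQuot T i) = Nat.card (ReesQuot S i) + 1) := by
  let f : T →ₙ* S := ⟨ν, hmul⟩
  have hf : Function.Surjective f := hsurj
  have hft : f t = 0 := (hker t).2 (Or.inr rfl)
  refine ⟨fun i _ hic => ?_, fun i hic => ?_⟩
  · have ht : t ∈ sgPow T i := sgPow_antitone T hic hc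
    exact ⟨MulEquiv.ofBijective (ReesQuot.map f i)
      ⟨ReesQuot.map_injective hf hinj hft ht, ReesQuot.map_surjective hf i⟩⟩
  · have ht : t ∉ sgPow T i := fun h => hc' (sgPow_antitone T hic h)
    exact Nat.card_reesQuot_eq_add_one hf hinj hft (hfgS.finite_compl_sgPow i) ht

/-- Let `T` be an annihilator extension of an infinite residually nilpotent finitely
generated semigroup `S`, with annihilating element `t` and Rees quotient map `ν : T → S`
with kernel `{t, 0}`, and let `c` be defined by `t ∈ T^c \ T^(c+1)`. Then the Rees
quotients satisfy `T/Tⁱ ≅ S/Sⁱ` for `1 ≤ i ≤ c`, and `|T/Tⁱ| = |S/Sⁱ| + 1` for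
`i ≥ c + 1`. -/
theorem statement5
    {S : Type*} [SemigroupWithZero S] [Infinite S]
    (hfgS : FGSemigroup S) (hrnS : ResiduallyNilpotent S)
    {T : Type*} [SemigroupWithZero T] [Infinite T]
    (t : T) (ht : t ≠ 0) (htl : ∀ x : T, t * x = 0) (htr : ∀ x : T, x * t = 0)
    (ν : T → S) (hmul : ∀ x y : T, ν (x * y) = ν x * ν y)
    (hsurj : Function.Surjective ν)
    (hker : ∀ x : T, ν x = 0 ↔ x = 0 ∨ x = t)
    (hinj : ∀ x y : T, x ≠ 0 → x ≠ t → ν x = ν y → x = y)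
    (c : ℕ) (hc : t ∈ sgPow T c) (hc' : t ∉ sgPow T (c + 1)) :
    (∀ i, 1 ≤ i → i ≤ c → Nonempty (ReesQuot T i ≃* ReesQuot S i)) ∧
    (∀ i, c + 1 ≤ i → Nat.card (ReesQuot T i) = Nat.card (ReesQuot S i) + 1) :=
  statement5_general hfgS t ν hmul hsurj hker hinj c hc hc'
end

section
/- Let n ≥ 6 be even and K a field containing a square root of -1. Let X = ⟨u, v | u^{n-1} = u^n, uv = u^{n/2}, vu = u^{n/2}, v^2 = u^{n-1}⟩ and J_{n-1} = ⟨u, v | u^{n-1} = u^n, uv = u^{n-1}, vu = u^{n-1}, v^2 = u^{n-2}⟩, nilpotent semigroups of order n with zero u^{n-1}. Then the contracted semigroup algebras KX and K J_{n-1} are isomorphic, via u ↦ u, v ↦ u^{n/2 - 1} - i·v where i^2 = -1. -/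
section AlgebraDefs

variable (K : Type*) [Field K] (A : Type*) [NonUnitalRing A] [Module K A]
  [SMulCommClass K A A] [IsScalarTower K A A]

/-- `algPow K A i` is the submodule `Aⁱ` spanned by all products of `i` elements
(with `A⁰ = A¹ = A`). -/
def algPow : ℕ → Submodule K A
  | 0 => ⊤
  | 1 => ⊤
  | n + 2 => Submodule.span K (Set.image2 (· * ·) ((algPow (n + 1) : Submodule K A) : Set A) Set.univ)

/-- The dimension of the layer `Aⁱ/Aⁱ⁺¹`. -/
noncomputable def algLayerDim (i : ℕ) : ℕ :=
  Module.finrank K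
    (↥(algPow K A i) ⧸ (algPow K A (i + 1)).comap (algPow K A i).subtype)

/-- The coclass of the nilpotent quotient `A/Aⁱ`, namely `dim (A/Aⁱ) - (i - 1)`. -/
noncomputable def algCcQuot (i : ℕ) : ℕ :=
  Module.finrank K (A ⧸ algPow K A i) - (i - 1)

/-- A finitely generated residually nilpotent algebra has coclass `r` if the coclasses
of its nilpotent quotients `A/Aⁱ` converge to `r`. -/
def HasCoclassAlg (r : ℕ) : Prop :=
  ∀ᶠ i in Filter.atTop, algCcQuot K A i = r

/-- The two-sided annihilator of an algebra, as a submodule. -/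
def twoSidedAnn : Submodule K A where
  carrier := {a | (∀ b, a * b = 0) ∧ ∀ b, b * a = 0}
  add_mem' := by
    intro a b ha hb
    exact ⟨fun c => by rw [add_mul, ha.1 c, hb.1 c, add_zero],
           fun c => by rw [mul_add, ha.2 c, hb.2 c, add_zero]⟩
  zero_mem' := ⟨fun b => zero_mul b, fun b => mul_zero b⟩
  smul_mem' := by
    intro k a ha
    exact ⟨fun b => by rw [smul_mul_assoc, ha.1 b, smul_zero],
           fun b => by rw [mul_smul_comm, ha.2 b, smul_zero]⟩

/-- The right annihilator of an algebra, as a submodule. -/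
def rightAnn : Submodule K A where
  carrier := {a | ∀ b, b * a = 0}
  add_mem' := by
    intro a b ha hb c
    rw [mul_add, ha c, hb c, add_zero]
  zero_mem' := fun b => mul_zero b
  smul_mem' := by
    intro k a ha b
    rw [mul_smul_comm, ha b, smul_zero]

end AlgebraDefs

/-- `IsContractedAlgebra K f` asserts that `f : S → A` exhibits the algebra `A` as the
contracted semigroup algebra of the semigroup-with-zero `S` over the field `K`:
`f` is multiplicative, sends zero to zero, and the images of the non-zero elements
of `S` form a `K`-basis of `A`. -/
def IsContractedAlgebra (K : Type*) [Field K] {S A : Type*} [SemigroupWithZero S]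
    [NonUnitalRing A] [Module K A] (f : S → A) : Prop :=
  f 0 = 0 ∧ (∀ s t : S, f (s * t) = f s * f t) ∧
  LinearIndependent K (fun s : {s : S // s ≠ 0} => f s.1) ∧
  Submodule.span K (Set.range fun s : {s : S // s ≠ 0} => f s.1) = ⊤
/-- `IsCC1Sg n a b c S u v` asserts that `S` is the nilpotent semigroup of order `n`
with zero given by the presentation
`⟨u, v ∣ u^(n-1) = u^n, u*v = u^a, v*u = u^b, v*v = u^c⟩`:
its distinct elements are `u, u², …, u^(n-2), v` and the zero `u^(n-1)`. -/
def IsCC1Sg (n a b c : ℕ) (S : Type*) [SemigroupWithZero S] (u v : S) : Prop :=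
  mpow u (n - 1) = 0 ∧ u * v = mpow u a ∧ v * u = mpow u b ∧ v * v = mpow u c ∧
  v ≠ 0 ∧ (∀ i, 1 ≤ i → i ≤ n - 2 → mpow u i ≠ 0) ∧
  (∀ i j, 1 ≤ i → i ≤ n - 2 → 1 ≤ j → j ≤ n - 2 → mpow u i = mpow u j → i = j) ∧
  (∀ i, 1 ≤ i → i ≤ n - 2 → v ≠ mpow u i) ∧
  (∀ s : S, s = 0 ∨ s = v ∨ ∃ i, 1 ≤ i ∧ i ≤ n - 2 ∧ s = mpow u i)

/-!
Write `U = u_J`, `V = v_J` and `m = n/2 - 1`, and send `u_X ↦ U`, `v_X ↦ W := U^m - iV`.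
In `J_(n-1)` the element `V` annihilates every power of `U`, so `U^k W = U^(k+m)` and
`W U^k = U^(m+k)`, matching `u^k v = u^(k+n/2-1)` in `X`; and
`W² = U^(2m) + i² V² = U^(n-2) - U^(n-2) = 0`, matching `v² = u^(n-1) = 0`.
The map hits `V = -i (U^m - W)`, and both algebras have dimension `n - 1`,
so it is bijective.
-/

section mpow

variable {S : Type*}

lemma mpow_one [Mul S] (x : S) : mpow x 1 = x := rfl

lemma mpow_succ [Mul S] (x : S) {k : ℕ} (hk : k ≠ 0) : mpow x (k + 1) = mpow x k * x := by
  obtain ⟨k, rfl⟩ := Nat.exists_eq_succ_of_ne_zero hk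
  rfl

lemma mpow_add [Semigroup S] (x : S) {a b : ℕ} (ha : a ≠ 0) (hb : b ≠ 0) :
    mpow x (a + b) = mpow x a * mpow x b := by
  induction b with
  | zero => contradiction
  | succ b ih =>
    rcases eq_or_ne b 0 with rfl | hb
    · exact mpow_succ x ha
    · rw [← add_assoc, mpow_succ x (by omega), ih hb, mpow_succ x hb, mul_assoc]

lemma mpow_eq_zero_of_le [SemigroupWithZero S] {x : S} {c k : ℕ} (hc : c ≠ 0)
    (hx : mpow x c = 0) (hk : c ≤ k) : mpow x k = 0 := by
  rcases hk.eq_or_lt with rfl | hlt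
  · exact hx
  · rw [← Nat.add_sub_cancel' hk, mpow_add x hc (by omega), hx, zero_mul]

lemma mpow_mul_of_mul_eq [Semigroup S] {u v : S} {c : ℕ} (hc : c ≠ 0)
    (h : u * v = mpow u c) {k : ℕ} (hk : k ≠ 0) : mpow u k * v = mpow u (k + c - 1) := by
  obtain ⟨k, rfl⟩ := Nat.exists_eq_succ_of_ne_zero hk
  rcases eq_or_ne k 0 with rfl | hk
  · simpa [mpow_one] using h
  · rw [mpow_succ u hk, mul_assoc, h, ← mpow_add u hk hc]
    congr 1
    omega

lemma mul_mpow_of_mul_eq [Semigroup S] {u v : S} {c : ℕ} (hc : c ≠ 0)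
    (h : v * u = mpow u c) {k : ℕ} (hk : k ≠ 0) : v * mpow u k = mpow u (c + k - 1) := by
  obtain ⟨k, rfl⟩ := Nat.exists_eq_succ_of_ne_zero hk
  rcases eq_or_ne k 0 with rfl | hk
  · simpa [mpow_one] using h
  · rw [mpow_succ u hk, ← mul_assoc, mul_mpow_of_mul_eq hc h hk, ← mpow_succ u (by omega)]
    congr 1
    omega

end mpow

section LinearAlgebra

lemma Module.Basis.map_mul_of_forall_basis {R ι A B : Type*} [CommSemiring R]
    [NonUnitalNonAssocSemiring A] [Module R A] [SMulCommClass R A A] [IsScalarTower R A A]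
    [NonUnitalNonAssocSemiring B] [Module R B] [SMulCommClass R B B] [IsScalarTower R B B]
    (b : Module.Basis ι R A) (e : A →ₗ[R] B)
    (h : ∀ j k, e (b j * b k) = e (b j) * e (b k)) (x y : A) : e (x * y) = e x * e y := by
  have hbil : (LinearMap.mul R A).compr₂ e = (LinearMap.mul R B).compl₁₂ e e :=
    b.ext fun j => b.ext fun k => h j k
  exact LinearMap.congr_fun (LinearMap.congr_fun hbil x) y

lemma Module.Basis.bijective_of_basis_mem_range {K ι V W : Type*} [DivisionRing K] [Finite ι]
    [AddCommGroup V] [Module K V] [AddCommGroup W] [Module K W]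
    (bV : Module.Basis ι K V) (bW : Module.Basis ι K W) (e : V →ₗ[K] W)
    (h : ∀ j, bW j ∈ LinearMap.range e) : Function.Bijective e := by
  have hsurj : Function.Surjective e := by
    rw [← LinearMap.range_eq_top, eq_top_iff, ← bW.span_eq, Submodule.span_le]
    rintro _ ⟨j, rfl⟩
    exact h j
  have := Module.Finite.of_basis bV
  have := Module.Finite.of_basis bW
  have hrank := (bV.equiv bW (Equiv.refl ι)).finrank_eq
  exact ⟨(LinearMap.injective_iff_surjective_of_finrank_eq_finrank hrank).mpr hsurj, hsurj⟩

end LinearAlgebra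

/-- The elements `v, u, u², …, u^m` of a semigroup, indexed by `none, some 0, …, some (m - 1)`. -/
def cc1Elem {S : Type*} [Mul S] (u v : S) {m : ℕ} : Option (Fin m) → S
  | none => v
  | some k => mpow u (k + 1)

namespace IsCC1Sg

variable {n a b c : ℕ} {S : Type*} [SemigroupWithZero S] {u v : S}

lemma mpow_eq_zero (h : IsCC1Sg n a b c S u v) (hn : 2 ≤ n) {k : ℕ} (hk : n - 1 ≤ k) :
    mpow u k = 0 :=
  mpow_eq_zero_of_le (by omega) h.1 hk

lemma mpow_mul_v (h : IsCC1Sg n a b c S u v) (ha : a ≠ 0) {k : ℕ} (hk : k ≠ 0) :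
    mpow u k * v = mpow u (k + a - 1) :=
  mpow_mul_of_mul_eq ha h.2.1 hk

lemma v_mul_mpow (h : IsCC1Sg n a b c S u v) (hb : b ≠ 0) {k : ℕ} (hk : k ≠ 0) :
    v * mpow u k = mpow u (b + k - 1) :=
  mul_mpow_of_mul_eq hb h.2.2.1 hk

lemma cc1Elem_bijective (h : IsCC1Sg n a b c S u v) :
    Function.Bijective fun j : Option (Fin (n - 2)) => (⟨cc1Elem u v j, by
      rcases j with _ | k
      · exact h.2.2.2.2.1
      · exact h.2.2.2.2.2.1 (k + 1) (by omega) (by omega)⟩ : {s : S // s ≠ 0}) := by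
  obtain ⟨-, -, -, -, -, -, hinj, hvu, hall⟩ := h
  constructor
  · rintro (_ | j) (_ | k) hjk <;> simp only [Subtype.mk.injEq, cc1Elem] at hjk
    · rfl
    · exact absurd hjk (hvu _ (by omega) (by omega))
    · exact absurd hjk.symm (hvu _ (by omega) (by omega))
    · have := hinj _ _ (by omega) (by omega) (by omega) (by omega) hjk
      rw [Fin.ext (by omega : (j : ℕ) = k)]
  · rintro ⟨s, hs⟩
    rcases hall s with rfl | rfl | ⟨k, hk1, hk2, rfl⟩
    · exact absurd rfl hs
    · exact ⟨none, rfl⟩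
    · refine ⟨some ⟨k - 1, by omega⟩, ?_⟩
      simp only [Subtype.mk.injEq, cc1Elem]
      congr 1
      omega

noncomputable def basis (h : IsCC1Sg n a b c S u v) (K : Type*) [Field K] {A : Type*}
    [NonUnitalRing A] [Module K A] {f : S → A} (hf : IsContractedAlgebra K f) :
    Module.Basis (Option (Fin (n - 2))) K A :=
  (Module.Basis.mk hf.2.2.1 hf.2.2.2.ge).reindex (Equiv.ofBijective _ h.cc1Elem_bijective).symm

lemma basis_apply (h : IsCC1Sg n a b c S u v) {K : Type*} [Field K] {A : Type*}
    [NonUnitalRing A] [Module K A] {f : S → A} (hf : IsContractedAlgebra K f) (j) :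
    h.basis K hf j = f (cc1Elem u v j) := by
  simp [basis]

end IsCC1Sg

noncomputable def twistMap {K : Type*} [Field K] (i : K) {n : ℕ} {SX SJ : Type*}
    [SemigroupWithZero SX] [Mul SJ] {uX vX : SX} {A B : Type*} [NonUnitalRing A] [Module K A]
    [AddCommGroup B] [Module K B] (g : SJ → B) (uJ vJ : SJ)
    (hX : IsCC1Sg n (n / 2) (n / 2) (n - 1) SX uX vX) {f : SX → A}
    (hf : IsContractedAlgebra K f) : A →ₗ[K] B :=
  (hX.basis K hf).constr K fun j =>
    Option.elim j (g (mpow uJ (n / 2 - 1)) - i • g vJ) fun k => g (mpow uJ (k + 1))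

section twistMap

variable {K : Type*} [Field K] (i : K) {n : ℕ}
  {SX : Type*} [SemigroupWithZero SX] {uX vX : SX} (hX : IsCC1Sg n (n / 2) (n / 2) (n - 1) SX uX vX)
  {SJ : Type*} [SemigroupWithZero SJ] {uJ vJ : SJ} (hJ : IsCC1Sg n (n - 1) (n - 1) (n - 2) SJ uJ vJ)
  {A : Type*} [NonUnitalRing A] [Module K A] {B : Type*} [NonUnitalRing B] [Module K B]
  {f : SX → A} (hf : IsContractedAlgebra K f) {g : SJ → B} (hg : IsContractedAlgebra K g)

lemma twistMap_v : twistMap i g uJ vJ hX hf (f vX) = g (mpow uJ (n / 2 - 1)) - i • g vJ := by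
  rw [← show hX.basis K hf none = f vX from hX.basis_apply hf none, twistMap,
    Module.Basis.constr_basis, Option.elim_none]

include hJ hg in
lemma twistMap_mpow (hn : 2 ≤ n) {k : ℕ} (hk : k ≠ 0) :
    twistMap i g uJ vJ hX hf (f (mpow uX k)) = g (mpow uJ k) := by
  by_cases hkn : k ≤ n - 2
  · have hb : hX.basis K hf (some ⟨k - 1, by omega⟩) = f (mpow uX k) := by
      rw [hX.basis_apply hf, cc1Elem, Nat.sub_add_cancel (by omega)]
    rw [← hb, twistMap, Module.Basis.constr_basis, Option.elim_some, Nat.sub_add_cancel (by omega)]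
  · rw [hX.mpow_eq_zero hn (by omega), hf.1, map_zero, hJ.mpow_eq_zero hn (by omega), hg.1]

include hJ hg in
lemma twistMap_bijective (hn : 4 ≤ n) (hi : i * i = -1) :
    Function.Bijective (twistMap i g uJ vJ hX hf) := by
  refine (hX.basis K hf).bijective_of_basis_mem_range (hJ.basis K hg) _ fun j => ?_
  rcases j with _ | k <;> rw [hJ.basis_apply hg, cc1Elem]
  · refine ⟨(-i) • (f (mpow uX (n / 2 - 1)) - f vX), ?_⟩
    rw [map_smul, map_sub, twistMap_mpow i hX hJ hf hg (by omega) (by omega), twistMap_v,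
      sub_sub_cancel, smul_smul, neg_mul, hi, neg_neg, one_smul]
  · exact ⟨f (mpow uX (k + 1)), twistMap_mpow i hX hJ hf hg (by omega) (by omega)⟩

variable [SMulCommClass K B B] [IsScalarTower K B B]

include hJ hg in
lemma twistMap_map_mul_basis (hn : 4 ≤ n) (hev : Even n) (hi : i * i = -1)
    (j k : Option (Fin (n - 2))) :
    twistMap i g uJ vJ hX hf (hX.basis K hf j * hX.basis K hf k) =
      twistMap i g uJ vJ hX hf (hX.basis K hf j) * twistMap i g uJ vJ hX hf (hX.basis K hf k) := by
  have hU : ∀ a, a ≠ 0 → twistMap i g uJ vJ hX hf (f (mpow uX a)) = g (mpow uJ a) :=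
    fun _ => twistMap_mpow i hX hJ hf hg (by omega)
  have hV := twistMap_v i hX hf (g := g) (uJ := uJ) (vJ := vJ)
  have hUU : ∀ a b, a ≠ 0 → b ≠ 0 → g (mpow uJ a) * g (mpow uJ b) = g (mpow uJ (a + b)) :=
    fun a b ha hb => by rw [← hg.2.1, mpow_add uJ ha hb]
  have hUV : ∀ a, a ≠ 0 → g (mpow uJ a) * g vJ = 0 := fun a ha => by
    rw [← hg.2.1, hJ.mpow_mul_v (by omega) ha, hJ.mpow_eq_zero (by omega) (by omega), hg.1]
  have hVU : ∀ a, a ≠ 0 → g vJ * g (mpow uJ a) = 0 := fun a ha => by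
    rw [← hg.2.1, hJ.v_mul_mpow (by omega) ha, hJ.mpow_eq_zero (by omega) (by omega), hg.1]
  simp only [hX.basis_apply hf, ← hf.2.1]
  rcases j with _ | j <;> rcases k with _ | k <;> simp only [cc1Elem]
  · have hVV : g vJ * g vJ = g (mpow uJ (n / 2 - 1)) * g (mpow uJ (n / 2 - 1)) := by
      rw [← hg.2.1, ← hg.2.1, hJ.2.2.2.1, ← mpow_add uJ (by omega) (by omega)]
      obtain ⟨r, rfl⟩ := hev
      congr 2
      omega
    rw [hX.2.2.2.1, hX.1, hf.1, map_zero, hV, sub_mul, mul_sub, mul_sub, smul_mul_assoc, mul_smul_comm, mul_smul_comm, smul_mul_assoc,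
      hUV _ (by omega), hVU _ (by omega), hVV, smul_smul, hi, smul_zero, neg_one_smul]
    abel
  · rw [hX.v_mul_mpow (by omega) (by omega), hU _ (by omega), hU _ (by omega), hV, sub_mul,
      smul_mul_assoc, hUU _ _ (by omega) (by omega), hVU _ (by omega), smul_zero, sub_zero]
    congr 2
    omega
  · rw [hX.mpow_mul_v (by omega) (by omega), hU _ (by omega), hU _ (by omega), hV, mul_sub,
      mul_smul_comm, hUU _ _ (by omega) (by omega), hUV _ (by omega), smul_zero, sub_zero]
    congr 2
    omega
  · rw [← mpow_add uX (by omega) (by omega), hU _ (by omega), hU _ (by omega), hU _ (by omega),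
      hUU _ _ (by omega) (by omega)]

end twistMap

/-- Let `n ≥ 6` be even and `K` a field containing a square root `i` of `-1`. Then the
contracted semigroup algebras of
`X = ⟨u, v ∣ u^(n-1) = uⁿ, u*v = u^(n/2), v*u = u^(n/2), v² = u^(n-1)⟩` and
`J_(n-1) = ⟨u, v ∣ u^(n-1) = uⁿ, u*v = u^(n-1), v*u = u^(n-1), v² = u^(n-2)⟩`
are isomorphic, via `u ↦ u`, `v ↦ u^(n/2 - 1) - i • v`. -/
theorem statement10 {K : Type*} [Field K] (n : ℕ) (hn : 6 ≤ n) (hev : Even n)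
    (i : K) (hi : i * i = -1)
    {SX : Type*} [SemigroupWithZero SX] (uX vX : SX)
    (hX : IsCC1Sg n (n / 2) (n / 2) (n - 1) SX uX vX)
    {SJ : Type*} [SemigroupWithZero SJ] (uJ vJ : SJ)
    (hJ : IsCC1Sg n (n - 1) (n - 1) (n - 2) SJ uJ vJ)
    {A : Type*} [NonUnitalRing A] [Module K A] [SMulCommClass K A A] [IsScalarTower K A A]
    {B : Type*} [NonUnitalRing B] [Module K B] [SMulCommClass K B B] [IsScalarTower K B B]
    (f : SX → A) (hf : IsContractedAlgebra K f)
    (g : SJ → B) (hg : IsContractedAlgebra K g) :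
    ∃ e : A →ₙₐ[K] B, Function.Bijective e ∧
      e (f uX) = g uJ ∧ e (f vX) = g (mpow uJ (n / 2 - 1)) - i • g vJ := by
  let e := twistMap i g uJ vJ hX hf
  have he_mul : ∀ x y, e (x * y) = e x * e y :=
    (hX.basis K hf).map_mul_of_forall_basis e
      (twistMap_map_mul_basis i hX hJ hf hg (by omega) hev hi)
  refine ⟨{ e.toDistribMulActionHom with map_mul' := he_mul },
    twistMap_bijective i hX hJ hf hg (by omega) hi, ?_, twistMap_v i hX hf⟩
  · show e (f (mpow uX 1)) = g (mpow uJ 1)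
    exact twistMap_mpow i hX hJ hf hg (by omega) one_ne_zero
end
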